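/- arXiv:1507.06440 — 4 statements merged into one kernel-verified Lean document; each statement's English description precedes it below -/
import Mathlib

section
/- Let F : ℝ × [0,1] → ℝ × [0,1] be a homeomorphism commuting with the translation T(x,y) = (x+1,y), and let X ⊆ ℝ × [0,1] be a closed T-invariant and F-invariant set. If a sequence (z_n) in X satisfies that (pr₁(Fⁿ(z_n)) − pr₁(z_n))/n converges to a limit L, then L lies in the closed interval [ρ_inf, ρ_sup], where ρ_inf and ρ_sup are the infimum and supremum over z ∈ X of liminf_{n→∞}(pr₁(Fⁿ(z)) − pr₁(z))/n and limsup_{n→∞}(pr₁(Fⁿ(z)) − pr₁(z))/n respectively. -/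
/-!
The displacement `Gₙ(w) = pr₁(Fⁿ w) - pr₁ w` is an additive cocycle over `F` which is invariant
under the deck translations, so it is determined by its values on the compact fundamental domain
`K = X ∩ ([0,1] × [0,1])`. If every point of `K` has `limsup Gₙ/n < r`, compactness gives a
uniform `M` such that every point of `K` achieves slope `< r` within `M` steps. Chaining such
blocks, translating back into `K` after each one, yields `Gₙ ≤ n r + const` uniformly on `X`,
hence `L ≤ r`. The lower bound is the same argument applied to `-G`.
-/

open Filter Topology

/-- The lifted annulus `𝒜 = ℝ × [0,1]`. -/
abbrev 𝒜 : Type := ℝ × (Set.Icc (0:ℝ) 1)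

/-- The deck translation `T(x,y) = (x+1,y)`. -/
def T : 𝒜 → 𝒜 := fun z => (z.1 + 1, z.2)

open Set Function

namespace Real

/-- No boundedness is needed: `Real.sInf_def` matches the junk values of both sides. -/
lemma limsup_neg {ι : Type*} {f : Filter ι} (u : ι → ℝ) :
    limsup (fun i => -u i) f = -liminf u f := by
  rw [limsup_eq, liminf_eq, Real.sInf_def]
  congr 2
  ext a
  simp [neg_le_neg_iff]

end Real

section Bounds

variable {ι : Type*} {f : Filter ι} [f.NeBot] {u : ι → ℝ} {C : ℝ}

lemma limsup_le_of_forall_abs_le (h : ∀ i, |u i| ≤ C) : limsup u f ≤ C :=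
  limsup_le_of_le (isBoundedUnder_of ⟨-C, fun i => (abs_le.1 (h i)).1⟩).isCoboundedUnder_le
    (Eventually.of_forall fun i => (abs_le.1 (h i)).2)

lemma le_liminf_of_forall_abs_le (h : ∀ i, |u i| ≤ C) : -C ≤ liminf u f :=
  le_liminf_of_le (isBoundedUnder_of ⟨C, fun i => (abs_le.1 (h i)).2⟩).isCoboundedUnder_ge
    (Eventually.of_forall fun i => (abs_le.1 (h i)).1)

end Bounds

lemma abs_div_natCast_le_of_abs_le {u : ℕ → ℝ} {C : ℝ} (h : ∀ n, |u n| ≤ n * C) (n : ℕ) :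
    |u n / n| ≤ C := by
  rcases n.eq_zero_or_pos with rfl | hn
  · simpa using (abs_nonneg _).trans (by simpa using h 1)
  · rw [abs_div, Nat.abs_cast, div_le_iff₀ (by exact_mod_cast hn), mul_comm]
    exact h n

lemma IsCompact.exists_uniform_lt_mul {α : Type*} [TopologicalSpace α] {K : Set α}
    {G : ℕ → α → ℝ} (hK : IsCompact K) (hGc : ∀ n, Continuous (G n)) {r : ℝ}
    (h : ∀ w ∈ K, ∃ n, 1 ≤ n ∧ G n w < n * r) :
    ∃ M : ℕ, ∀ w ∈ K, ∃ n ∈ Icc 1 M, G n w < n * r := by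
  have hopen (M : ℕ) : IsOpen (⋃ n ∈ Icc 1 M, {w | G n w < n * r}) :=
    isOpen_biUnion fun n _ => isOpen_lt (hGc n) continuous_const
  have hcover : K ⊆ ⋃ M : ℕ, ⋃ n ∈ Icc 1 M, {w | G n w < n * r} := fun w hw => by
    obtain ⟨n, hn, hlt⟩ := h w hw
    exact mem_iUnion.2 ⟨n, mem_iUnion₂.2 ⟨n, ⟨hn, le_rfl⟩, hlt⟩⟩
  have hmono : Monotone fun M : ℕ => ⋃ n ∈ Icc 1 M, {w | G n w < n * r} := fun M M' hM =>
    biUnion_subset_biUnion_left (Icc_subset_Icc_right hM)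
  obtain ⟨M, hM⟩ := hK.elim_directed_cover _ hopen hcover hmono.directed_le
  exact ⟨M, fun w hw => by simpa using hM hw⟩

def IsAddCocycle {α : Type*} (Φ : α → α) (G : ℕ → α → ℝ) : Prop :=
  ∀ m n w, G (m + n) w = G m w + G n (Φ^[m] w)

namespace IsAddCocycle

variable {α : Type*} {Φ : α → α} {G : ℕ → α → ℝ} {X K : Set α}

lemma neg (hG : IsAddCocycle Φ G) : IsAddCocycle Φ fun n w => -G n w := fun m n w => by
  simp only [hG m n w, neg_add]

lemma apply_zero (hG : IsAddCocycle Φ G) (w : α) : G 0 w = 0 := by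
  simpa using hG 0 0 w

lemma abs_le (hG : IsAddCocycle Φ G) (hΦ : MapsTo Φ X X) {C : ℝ}
    (hC : ∀ w ∈ X, |G 1 w| ≤ C) (n : ℕ) {w : α} (hw : w ∈ X) : |G n w| ≤ n * C := by
  induction n with
  | zero => simp [hG.apply_zero]
  | succ n ih =>
    calc |G (n + 1) w| = |G n w + G 1 (Φ^[n] w)| := by rw [hG]
      _ ≤ |G n w| + |G 1 (Φ^[n] w)| := abs_add_le _ _
      _ ≤ n * C + C := add_le_add ih (hC _ (hΦ.iterate n hw))
      _ = (n + 1 : ℕ) * C := by push_cast; ring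

lemma le_of_uniform_lt (hG : IsAddCocycle Φ G) (hΦ : MapsTo Φ X X) (hKX : K ⊆ X)
    (hred : ∀ w ∈ X, ∃ v ∈ K, ∀ n, G n v = G n w) {C r : ℝ} {M : ℕ}
    (hC : ∀ n, ∀ w ∈ K, G n w ≤ n * C) (hM : ∀ w ∈ K, ∃ n ∈ Icc 1 M, G n w < n * r) (n : ℕ) :
    ∀ w ∈ K, G n w ≤ n * r + M * |C - r| := by
  induction n using Nat.strong_induction_on with
  | _ n ih =>
  intro w hw
  by_cases hnM : n ≤ M
  · have : (n : ℝ) * (C - r) ≤ M * |C - r| :=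
      calc (n : ℝ) * (C - r) ≤ n * |C - r| := by gcongr; exact le_abs_self _
        _ ≤ M * |C - r| := by gcongr
    linarith [hC n w hw]
  · obtain ⟨k, ⟨hk1, hkM⟩, hk⟩ := hM w hw
    obtain ⟨v, hv, hvw⟩ := hred (Φ^[k] w) (hΦ.iterate k (hKX hw))
    have hnk : n = k + (n - k) := by omega
    calc G n w = G k w + G (n - k) v := by rw [hnk, hG, hvw, ← hnk]
      _ ≤ k * r + ((n - k : ℕ) * r + M * |C - r|) := add_le_add hk.le (ih _ (by omega) v hv)
      _ = n * r + M * |C - r| := by rw [Nat.cast_sub (by omega)]; ring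

variable [TopologicalSpace α]

lemma exists_abs_le (hG : IsAddCocycle Φ G) (hΦ : MapsTo Φ X X) (hK : IsCompact K)
    (hG₁ : Continuous (G 1)) (hred : ∀ w ∈ X, ∃ v ∈ K, ∀ n, G n v = G n w) :
    ∃ C, ∀ n, ∀ w ∈ X, |G n w| ≤ n * C := by
  obtain ⟨C, hC⟩ := hK.exists_bound_of_continuousOn hG₁.continuousOn
  refine ⟨C, fun n w hw => hG.abs_le hΦ (fun w hw => ?_) n hw⟩
  obtain ⟨v, hv, hvw⟩ := hred w hw
  simpa [← hvw 1] using hC v hv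

theorem le_of_tendsto_div (hG : IsAddCocycle Φ G) (hΦ : MapsTo Φ X X) (hK : IsCompact K)
    (hKX : K ⊆ X) (hGc : ∀ n, Continuous (G n)) (hred : ∀ w ∈ X, ∃ v ∈ K, ∀ n, G n v = G n w)
    {ρ : ℝ} (hρ : ∀ w ∈ K, limsup (fun n : ℕ => G n w / n) atTop ≤ ρ) {z : ℕ → α}
    (hz : ∀ n, z n ∈ X) {L : ℝ} (hL : Tendsto (fun n : ℕ => G n (z n) / n) atTop (𝓝 L)) :
    L ≤ ρ := by
  obtain ⟨C, hC⟩ := hG.exists_abs_le hΦ hK (hGc 1) hred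
  refine le_of_forall_gt_imp_ge_of_dense fun r hr => ?_
  have hgood : ∀ w ∈ K, ∃ n, 1 ≤ n ∧ G n w < n * r := by
    intro w hw
    have hbdd : IsBoundedUnder (· ≤ ·) atTop (fun n : ℕ => G n w / n) := isBoundedUnder_of
      ⟨C, fun n => (_root_.abs_le.1 (abs_div_natCast_le_of_abs_le (hC · w (hKX hw)) n)).2⟩
    obtain ⟨n, hn, hn1⟩ :=
      ((eventually_lt_of_limsup_lt ((hρ w hw).trans_lt hr) hbdd).and (eventually_ge_atTop 1)).exists
    exact ⟨n, hn1, (div_lt_iff₀' (by exact_mod_cast hn1)).1 hn⟩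
  obtain ⟨M, hM⟩ := hK.exists_uniform_lt_mul hGc hgood
  have hchain := hG.le_of_uniform_lt hΦ hKX hred
    (fun n w hw => (le_abs_self _).trans (hC n w (hKX hw))) hM
  have hle : ∀ᶠ n : ℕ in atTop, G n (z n) / n ≤ r + M * |C - r| / n := by
    filter_upwards [eventually_gt_atTop 0] with n hn
    obtain ⟨v, hv, hvz⟩ := hred (z n) (hz n)
    rw [div_le_iff₀ (by positivity), add_mul, div_mul_cancel₀ _ (by positivity), ← hvz, mul_comm r]
    exact hchain n v hv
  have hlim : Tendsto (fun n : ℕ => r + M * |C - r| / n) atTop (𝓝 r) := by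
    simpa using tendsto_const_nhds.add (tendsto_const_div_atTop_nhds_zero_nat (M * |C - r|))
  exact le_of_tendsto_of_tendsto hL hlim hle

theorem ge_of_tendsto_div (hG : IsAddCocycle Φ G) (hΦ : MapsTo Φ X X) (hK : IsCompact K)
    (hKX : K ⊆ X) (hGc : ∀ n, Continuous (G n)) (hred : ∀ w ∈ X, ∃ v ∈ K, ∀ n, G n v = G n w)
    {ρ : ℝ} (hρ : ∀ w ∈ K, ρ ≤ liminf (fun n : ℕ => G n w / n) atTop) {z : ℕ → α}
    (hz : ∀ n, z n ∈ X) {L : ℝ} (hL : Tendsto (fun n : ℕ => G n (z n) / n) atTop (𝓝 L)) :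
    ρ ≤ L := by
  have := hG.neg.le_of_tendsto_div hΦ hK hKX (fun n => (hGc n).neg) (ρ := -ρ)
    (fun w hw => (hred w hw).imp fun v ⟨hv, h⟩ => ⟨hv, fun n => by rw [h]⟩)
    (fun w hw => by simp_rw [neg_div, Real.limsup_neg]; linarith [hρ w hw]) hz
    (by simpa only [neg_div] using hL.neg)
  linarith

end IsAddCocycle

/-- `T` as a permutation, so that the integer translations are the powers `deckPerm ^ m`. -/
def deckPerm : Equiv.Perm 𝒜 where
  toFun := T
  invFun w := (w.1 - 1, w.2)
  left_inv w := by simp [T]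
  right_inv w := by simp [T]

lemma deckPerm_zpow_apply (m : ℤ) (w : 𝒜) : (deckPerm ^ m) w = (w.1 + m, w.2) := by
  induction m using Int.induction_on with
  | zero => simp
  | succ m ih =>
    rw [add_comm, zpow_add, zpow_one, Equiv.Perm.mul_apply, ih]
    exact Prod.ext (by simp [deckPerm, T]; ring) rfl
  | pred m ih =>
    rw [sub_eq_neg_add, zpow_add, zpow_neg_one, Equiv.Perm.mul_apply, ih]
    exact Prod.ext (by simp [deckPerm, Equiv.Perm.inv_def]; ring) rfl

open scoped Pointwise in
lemma zpow_deckPerm_mem {X : Set 𝒜} (hX : T '' X = X) (m : ℤ) {w : 𝒜} (hw : w ∈ X) :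
    (deckPerm ^ m) w ∈ X := by
  have hT : deckPerm ∈ MulAction.stabilizer (Equiv.Perm 𝒜) X := hX
  rw [← MulAction.mem_stabilizer_iff.1 ((MulAction.stabilizer _ X).zpow_mem hT m)]
  exact Set.smul_mem_smul_set hw

lemma exists_zpow_deckPerm_fst_mem_Icc (w : 𝒜) :
    ∃ m : ℤ, ((deckPerm ^ m) w).1 ∈ Icc (0 : ℝ) 1 :=
  ⟨-⌊w.1⌋, by
    rw [deckPerm_zpow_apply]
    push_cast
    exact ⟨by linarith [Int.floor_le w.1], by linarith [Int.lt_floor_add_one w.1]⟩⟩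

def displacement (f : 𝒜 → 𝒜) (n : ℕ) (w : 𝒜) : ℝ := (f^[n] w).1 - w.1

lemma isAddCocycle_displacement (f : 𝒜 → 𝒜) : IsAddCocycle f (displacement f) := by
  intro m n w
  simp only [displacement, add_comm m n, iterate_add_apply]
  ring

lemma continuous_displacement {f : 𝒜 → 𝒜} (hf : Continuous f) (n : ℕ) :
    Continuous (displacement f n) :=
  (hf.iterate n).fst.sub continuous_fst

lemma displacement_zpow_deckPerm {f : Equiv.Perm 𝒜} (hf : Commute f deckPerm) (n : ℕ) (m : ℤ)
    (w : 𝒜) : displacement f n ((deckPerm ^ m) w) = displacement f n w := by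
  have hcomm : (⇑f)^[n] ((deckPerm ^ m) w) = (deckPerm ^ m) ((⇑f)^[n] w) := by
    simpa only [Equiv.Perm.iterate_eq_pow, Equiv.Perm.mul_apply]
      using Equiv.congr_fun ((hf.zpow_right m).pow_left n).eq w
  rw [displacement, displacement, hcomm, deckPerm_zpow_apply, deckPerm_zpow_apply]
  ring

lemma exists_mem_Icc_displacement_eq {f : Equiv.Perm 𝒜} (hf : Commute f deckPerm) {X : Set 𝒜}
    (hX : T '' X = X) {w : 𝒜} (hw : w ∈ X) :
    ∃ v ∈ {z ∈ X | z.1 ∈ Icc (0 : ℝ) 1}, ∀ n, displacement f n v = displacement f n w := by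
  obtain ⟨m, hm⟩ := exists_zpow_deckPerm_fst_mem_Icc w
  exact ⟨_, ⟨zpow_deckPerm_mem hX m hw, hm⟩, fun n => displacement_zpow_deckPerm hf n m w⟩

theorem stmt_1_general (F : 𝒜 ≃ₜ 𝒜) (hFT : ∀ z, F (T z) = T (F z))
    (X : Set 𝒜) (hXT : T '' X = X) (hXF : F '' X = X)
    (hXc : IsCompact {z ∈ X | z.1 ∈ Set.Icc (0:ℝ) 1})
    (z : ℕ → 𝒜) (hz : ∀ n, z n ∈ X) (L : ℝ)
    (hL : Tendsto (fun n : ℕ => (((⇑F)^[n] (z n)).1 - (z n).1) / (n:ℝ)) atTop (𝓝 L)) :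
    sInf {r | ∃ w ∈ X, r = liminf (fun n : ℕ => (((⇑F)^[n] w).1 - w.1) / (n:ℝ)) atTop} ≤ L ∧
    L ≤ sSup {r | ∃ w ∈ X, r = limsup (fun n : ℕ => (((⇑F)^[n] w).1 - w.1) / (n:ℝ)) atTop} := by
  have hFX : MapsTo F X X := fun w hw => hXF ▸ mem_image_of_mem F hw
  have hred (w : 𝒜) (hw : w ∈ X) := exists_mem_Icc_displacement_eq (Equiv.ext hFT) hXT hw
  have hG := isAddCocycle_displacement F
  have hGc := continuous_displacement F.continuous
  obtain ⟨C, hC⟩ := hG.exists_abs_le hFX hXc (hGc 1) hred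
  have hdiv (w : 𝒜) (hw : w ∈ X) : ∀ n : ℕ, |displacement F n w / n| ≤ C :=
    abs_div_natCast_le_of_abs_le fun n => hC n w hw
  constructor
  · refine hG.ge_of_tendsto_div hFX hXc (sep_subset X _) hGc hred (fun w hw => ?_) hz hL
    refine csInf_le ⟨-C, ?_⟩ ⟨w, hw.1, rfl⟩
    rintro _ ⟨w, hw, rfl⟩
    exact le_liminf_of_forall_abs_le (hdiv w hw)
  · refine hG.le_of_tendsto_div hFX hXc (sep_subset X _) hGc hred (fun w hw => ?_) hz hL
    refine le_csSup ⟨C, ?_⟩ ⟨w, hw.1, rfl⟩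
    rintro _ ⟨w, hw, rfl⟩
    exact limsup_le_of_forall_abs_le (hdiv w hw)

/-- If `F` is a homeomorphism of `ℝ × [0,1]` commuting with the translation `T`,
`X` is a closed `T`- and `F`-invariant set (compact modulo `T`), and a sequence
`(z_n)` in `X` satisfies that `(pr₁(Fⁿ(z_n)) − pr₁(z_n))/n → L`, then `L` lies in
`[ρ_inf, ρ_sup]`, the interval between the infimum of the pointwise liminfs and the
supremum of the pointwise limsups over `X`. -/
theorem stmt_1 (F : 𝒜 ≃ₜ 𝒜) (hFT : ∀ z, F (T z) = T (F z))
    (X : Set 𝒜) (hXcl : IsClosed X) (hXT : T '' X = X) (hXF : F '' X = X)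
    (hXc : IsCompact {z ∈ X | z.1 ∈ Set.Icc (0:ℝ) 1})
    (z : ℕ → 𝒜) (hz : ∀ n, z n ∈ X) (L : ℝ)
    (hL : Tendsto (fun n : ℕ => (((⇑F)^[n] (z n)).1 - (z n).1) / (n:ℝ)) atTop (𝓝 L)) :
    sInf {r | ∃ w ∈ X, r = liminf (fun n : ℕ => (((⇑F)^[n] w).1 - w.1) / (n:ℝ)) atTop} ≤ L ∧
    L ≤ sSup {r | ∃ w ∈ X, r = limsup (fun n : ℕ => (((⇑F)^[n] w).1 - w.1) / (n:ℝ)) atTop} :=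
  stmt_1_general F hFT X hXT hXF hXc z hz L hL
end

section
/- Let F be a homeomorphism of 𝒜 = ℝ × [0,1] commuting with T(x,y)=(x+1,y) and with bounded displacement, and let 𝒦 ⊆ 𝒜 be a closed F-invariant and T-invariant set such that for some ε > 0 there is no periodic ε-chain for F|_𝒦. Then for every z ∈ 𝒦, the first coordinate pr₁(Fⁿ(z)) tends to +∞ or to −∞ as n → ∞. -/
open Filter Topology

/-- An `ε`-chain of length `m` for `F` inside `𝒦`. -/
def IsChainIn (F : 𝒜 → 𝒜) (𝒦 : Set 𝒜) (ε : ℝ) (c : ℕ → 𝒜) (m : ℕ) : Prop :=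
  (∀ i ≤ m, c i ∈ 𝒦) ∧ ∀ i < m, dist (F (c i)) (c (i+1)) < ε

/-!
A real sequence whose downward steps are bounded by `B` cannot pass from `≥ c` to `< c` without
visiting `[c - B, c]`. So if the first coordinate of an orbit tends neither to `+∞` nor to `−∞`,
it returns infinitely often to a bounded interval, and the orbit returns infinitely often to the
compact part of `𝒦` above that interval. Two such returns are `ε`-close, and the orbit segment
between them, closed up by the last jump, is a periodic `ε`-chain in `𝒦`.
-/

theorem exists_ge_mem_Icc_of_le_of_lt {x : ℕ → ℝ} {B c : ℝ} (hstep : ∀ k, x k - B ≤ x (k + 1))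
    {n m : ℕ} (hnm : n ≤ m) (hn : c ≤ x n) (hm : x m < c) :
    ∃ k ≥ n, x k ∈ Set.Icc (c - B) c := by
  induction m, hnm using Nat.le_induction with
  | base => exact absurd hn hm.not_ge
  | succ m hnm ih =>
    by_cases hxm : x m < c
    · exact ih hxm
    · exact ⟨m + 1, by omega, by linarith [hstep m], hm.le⟩

theorem frequently_mem_Icc_of_not_tendsto {x : ℕ → ℝ} {B : ℝ} (hstep : ∀ k, x k - B ≤ x (k + 1))
    (htop : ¬Tendsto x atTop atTop) (hbot : ¬Tendsto x atTop atBot) :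
    ∃ a b, ∃ᶠ n in atTop, x n ∈ Set.Icc a b := by
  obtain ⟨b, hlow⟩ : ∃ b, ∀ N, ∃ n ≥ N, x n < b := by
    simpa [tendsto_atTop, Filter.not_eventually, Filter.frequently_atTop] using htop
  obtain ⟨b', hhigh⟩ : ∃ b', ∀ N, ∃ n ≥ N, b' < x n := by
    simpa [tendsto_atBot, Filter.not_eventually, Filter.frequently_atTop] using hbot
  refine ⟨min b' (max b b' - B), max b b', Filter.frequently_atTop.2 fun N => ?_⟩
  obtain ⟨n, hnN, hn⟩ := hhigh N
  by_cases hnc : x n ≤ max b b'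
  · exact ⟨n, hnN, (min_le_left _ _).trans hn.le, hnc⟩
  obtain ⟨m, hmn, hm⟩ := hlow n
  obtain ⟨k, hkn, hk⟩ := exists_ge_mem_Icc_of_le_of_lt hstep hmn (not_le.1 hnc).le
    (hm.trans_le (le_max_left b b'))
  exact ⟨k, hnN.trans hkn, (min_le_right _ _).trans hk.1, hk.2⟩

theorem exists_lt_dist_lt_of_frequently_mem {α : Type*} [PseudoMetricSpace α] {u : ℕ → α}
    {K : Set α} (hK : IsCompact K) (hu : ∃ᶠ n in atTop, u n ∈ K) {ε : ℝ} (hε : 0 < ε) :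
    ∃ m n, m < n ∧ dist (u n) (u m) < ε := by
  obtain ⟨φ, hφ, hφK⟩ := extraction_of_frequently_atTop hu
  obtain ⟨p, -, ψ, hψ, hlim⟩ := hK.tendsto_subseq hφK
  obtain ⟨N, hN⟩ := Metric.cauchySeq_iff'.1 hlim.cauchySeq ε hε
  exact ⟨φ (ψ N), φ (ψ (N + 1)), hφ (hψ N.lt_succ_self), hN _ N.le_succ⟩

theorem Prod.fst_sub_le_of_dist_le {β : Type*} [PseudoMetricSpace β] {p q : ℝ × β} {B : ℝ}
    (h : dist p q ≤ B) : q.1 - B ≤ p.1 := by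
  have h₁ : dist p.1 q.1 ≤ B := (le_max_left _ _).trans (Prod.dist_eq.symm.le.trans h)
  rw [Real.dist_eq] at h₁
  linarith [neg_abs_le (p.1 - q.1)]

theorem exists_periodic_chain_of_dist_iterate_lt {F : 𝒜 → 𝒜} {𝒦 : Set 𝒜} {ε : ℝ} (hε : 0 < ε)
    (hF : Set.MapsTo F 𝒦 𝒦) {z : 𝒜} (hz : z ∈ 𝒦) {n₀ n₁ : ℕ} (hlt : n₀ < n₁)
    (hd : dist (F^[n₁] z) (F^[n₀] z) < ε) :
    ∃ c m, 1 ≤ m ∧ IsChainIn F 𝒦 ε c m ∧ c m = c 0 := by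
  set L := n₁ - n₀
  -- the orbit segment `Fⁿ⁰ z, …, Fⁿ¹⁻¹ z`, repeated with period `L`
  refine ⟨fun i => F^[n₀ + i % L] z, L, by omega, ⟨fun i _ => hF.iterate _ hz, fun i hi => ?_⟩,
    by simp⟩
  have hFi : F (F^[n₀ + i % L] z) = F^[n₀ + i + 1] z := by
    rw [Nat.mod_eq_of_lt hi, ← Function.iterate_succ_apply' F]
  rw [hFi]
  rcases (show i + 1 ≤ L from hi).lt_or_eq with hnext | hnext
  · dsimp only
    rw [Nat.mod_eq_of_lt hnext, ← add_assoc, dist_self]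
    exact hε
  · dsimp only
    rw [hnext, Nat.mod_self, add_zero, show n₀ + i + 1 = n₁ by omega]
    exact hd

theorem stmt_11_general (F : 𝒜 ≃ₜ 𝒜)
    (hbd : ∃ B : ℝ, ∀ z : 𝒜, dist (F z) z ≤ B)
    (𝒦 : Set 𝒜) (hcl : IsClosed 𝒦) (hF : F '' 𝒦 = 𝒦)
    (hchain : ∃ ε > (0:ℝ), ∀ c : ℕ → 𝒜, ∀ m : ℕ, 1 ≤ m →
        IsChainIn (⇑F) 𝒦 ε c m → c m ≠ c 0) :
    ∀ z ∈ 𝒦, Tendsto (fun n : ℕ => ((⇑F)^[n] z).1) atTop atTop ∨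
      Tendsto (fun n : ℕ => ((⇑F)^[n] z).1) atTop atBot := by
  obtain ⟨B, hB⟩ := hbd
  obtain ⟨ε, hε, hnochain⟩ := hchain
  have hmaps : Set.MapsTo F 𝒦 𝒦 := Set.mapsTo_iff_image_subset.2 hF.subset
  intro z hz
  by_contra! hdiv
  have hstep (k : ℕ) : ((⇑F)^[k] z).1 - B ≤ ((⇑F)^[k + 1] z).1 := by
    rw [Function.iterate_succ_apply']
    exact Prod.fst_sub_le_of_dist_le (hB _)
  obtain ⟨a, b, hfreq⟩ := frequently_mem_Icc_of_not_tendsto hstep hdiv.1 hdiv.2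
  have hK : IsCompact (𝒦 ∩ Set.Icc a b ×ˢ Set.univ) :=
    (isCompact_Icc.prod isCompact_univ).inter_left hcl
  obtain ⟨n₀, n₁, hlt, hd⟩ := exists_lt_dist_lt_of_frequently_mem hK
    (hfreq.mono fun n hn => ⟨hmaps.iterate n hz, hn, trivial⟩) hε
  obtain ⟨c, m, hm, hc, hcm⟩ := exists_periodic_chain_of_dist_iterate_lt hε hmaps hz hlt hd
  exact hnochain c m hm hc hcm

/-- Let `F` be a homeomorphism of `ℝ × [0,1]` commuting with `T` and with bounded
displacement, and let `𝒦` be a closed `F`- and `T`-invariant set such that for some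
`ε > 0` there is no periodic `ε`-chain for `F|𝒦`. Then for every `z ∈ 𝒦`, the first
coordinate of `Fⁿ(z)` tends to `+∞` or to `−∞` as `n → ∞`. -/
theorem stmt_11 (F : 𝒜 ≃ₜ 𝒜) (hFT : ∀ z, F (T z) = T (F z))
    (hbd : ∃ B : ℝ, ∀ z : 𝒜, dist (F z) z ≤ B)
    (𝒦 : Set 𝒜) (hcl : IsClosed 𝒦) (hF : F '' 𝒦 = 𝒦) (hT : T '' 𝒦 = 𝒦)
    (hchain : ∃ ε > (0:ℝ), ∀ c : ℕ → 𝒜, ∀ m : ℕ, 1 ≤ m →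
        IsChainIn (⇑F) 𝒦 ε c m → c m ≠ c 0) :
    ∀ z ∈ 𝒦, Tendsto (fun n : ℕ => ((⇑F)^[n] z).1) atTop atTop ∨
      Tendsto (fun n : ℕ => ((⇑F)^[n] z).1) atTop atBot :=
  stmt_11_general F hbd 𝒦 hcl hF hchain
end

section
/- Let f : A → A be an area-preserving homeomorphism of the closed annulus A = S¹ × [0,1] isotopic to the identity with lift F, and let K ⊂ int A be an f-invariant essential annular continuum with empty interior. Assume (i) the prime-ends rotation numbers ρ⁺(F,K) and ρ⁻(F,K) belong to the rotation interval ρ̄(F,K) [Matsumoto], (ii) every rational in ρ̄(F,K) is realized by a periodic point in K [Franks–Le Calvez], and (iii) if a lift TᵏFⁿ has nonzero upper (resp. lower) prime-ends rotation number then fⁿ has no fixed point in ∂U₊ (resp. ∂U₋) [Koropecki–Le Calvez–Nassiri]. Then ρ(F,K) is a singleton and its unique element equals ρ⁺(F,K) = ρ⁻(F,K). -/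
open Filter Topology MeasureTheory

/-- The closed annulus `A = S¹ × [0,1]`. -/
abbrev Ann : Type := AddCircle (1:ℝ) × (Set.Icc (0:ℝ) 1)

/-- The universal covering map. -/
noncomputable def cov : 𝒜 → Ann := fun z => ((z.1 : AddCircle (1:ℝ)), z.2)

/-- The lower boundary circle. -/
def bd0 : Set Ann := {z | (z.2 : ℝ) = 0}

/-- The upper boundary circle. -/
def bd1 : Set Ann := {z | (z.2 : ℝ) = 1}

/-- `K` is contained in the open annulus. -/
def InInterior (K : Set Ann) : Prop := ∀ z ∈ K, (0:ℝ) < z.2 ∧ (z.2 : ℝ) < 1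

/-- The rotation set of `F` on (the preimage of) `K`. -/
def rotSet (F : 𝒜 ≃ₜ 𝒜) (K : Set Ann) : Set ℝ :=
  {r | ∃ zt : 𝒜, cov zt ∈ K ∧
    Tendsto (fun n : ℕ => (((⇑F)^[n] zt).1 - zt.1) / (n:ℝ)) atTop (𝓝 r)}

/-- Theorem (no area-preserving Birkhoff attractor): let `f` be an area-preserving
homeomorphism of the annulus with lift `F` and `K` an invariant essential annular
continuum with empty interior, with complementary components `U` (upper) and `V`
(lower). Given the prime-ends rotation numbers `ρp`, `ρm` of `F` on `K`, assume
(i) `ρp, ρm ∈ ρ̄(F,K)`; (ii) every rational in `ρ̄(F,K)` is realized by a periodic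
point in `K`; (iii) if `n·ρp + k ≠ 0` (resp. `n·ρm + k ≠ 0`) then `fⁿ` has no fixed
point in `∂U` (resp. `∂V`). Then the rotation set `ρ(F,K)` is the singleton `{ρp}` and
`ρm = ρp`. -/
theorem stmt_15 (f : Ann ≃ₜ Ann) (F : 𝒜 ≃ₜ 𝒜)
    (hlift : ∀ z : 𝒜, cov (F z) = f (cov z)) (hFT : ∀ z, F (T z) = T (F z))
    (μ : Measure Ann) (hμpos : ∀ W : Set Ann, IsOpen W → W.Nonempty → 0 < μ W)
    (harea : MeasurePreserving f μ μ)
    (K U V : Set Ann)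
    (hKc : IsCompact K) (hKconn : IsConnected K) (hKint : InInterior K)
    (hU : IsOpen U) (hV : IsOpen V) (hUconn : IsConnected U) (hVconn : IsConnected V)
    (hdisj : U ∩ V = ∅) (hcover : U ∪ V = Kᶜ) (hbd1 : bd1 ⊆ U) (hbd0 : bd0 ⊆ V)
    (hempty : interior K = ∅) (hKinv : f '' K = K)
    (ρp ρm : ℝ)
    (hi : sInf (rotSet F K) ≤ ρp ∧ ρp ≤ sSup (rotSet F K) ∧
          sInf (rotSet F K) ≤ ρm ∧ ρm ≤ sSup (rotSet F K))
    (hii : ∀ p : ℤ, ∀ q : ℕ, 1 ≤ q →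
      sInf (rotSet F K) ≤ (p:ℝ)/(q:ℝ) → (p:ℝ)/(q:ℝ) ≤ sSup (rotSet F K) →
      ∃ zt : 𝒜, cov zt ∈ K ∧ (⇑F)^[q] zt = (zt.1 + (p:ℝ), zt.2))
    (hiii : ∀ n : ℕ, ∀ k : ℤ, 1 ≤ n →
      ((n:ℝ) * ρp + (k:ℝ) ≠ 0 → ∀ z ∈ frontier U, (⇑f)^[n] z ≠ z) ∧
      ((n:ℝ) * ρm + (k:ℝ) ≠ 0 → ∀ z ∈ frontier V, (⇑f)^[n] z ≠ z)) :
    rotSet F K = {ρp} ∧ ρm = ρp := by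
  classical
  set a := sInf (rotSet F K) with ha
  set b := sSup (rotSet F K) with hb
  -- K is contained in frontier U ∪ frontier V
  have hKfr : K ⊆ frontier U ∪ frontier V := by
    intro x hx
    have hxcl : x ∈ closure (U ∪ V) := by
      rw [hcover, closure_compl]
      intro hmem
      rw [hempty] at hmem
      exact hmem
    have hxnot : x ∉ U ∪ V := by
      intro hmem
      rw [hcover] at hmem
      exact hmem hx
    rw [closure_union] at hxcl
    rcases hxcl with h | h
    · left
      rw [frontier, hU.interior_eq]
      exact ⟨h, fun hu => hxnot (Or.inl hu)⟩
    · right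
      rw [frontier, hV.interior_eq]
      exact ⟨h, fun hv => hxnot (Or.inr hv)⟩
  -- iterates commute with the covering
  have hiter : ∀ (n : ℕ) (zt : 𝒜), (⇑f)^[n] (cov zt) = cov ((⇑F)^[n] zt) := by
    intro n
    induction n with
    | zero => intro zt; simp
    | succ m ih =>
      intro zt
      rw [Function.iterate_succ_apply', Function.iterate_succ_apply', ih, hlift]
  -- key lemma: no rational lies in [a, b]
  have key : ∀ (p : ℤ) (q : ℕ), 1 ≤ q → a ≤ (p:ℝ)/(q:ℝ) → (p:ℝ)/(q:ℝ) ≤ b → False := by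
    intro p q hq h1 h2
    obtain ⟨zt, hztK, hper⟩ := hii p q hq h1 h2
    have hfix : (⇑f)^[q] (cov zt) = cov zt := by
      rw [hiter q zt, hper]
      have hcoe : ((zt.1 + (p:ℝ) : ℝ) : AddCircle (1:ℝ)) = (zt.1 : AddCircle (1:ℝ)) := by
        rw [QuotientAddGroup.eq_iff_sub_mem]
        have : zt.1 + (p:ℝ) - zt.1 = (p:ℝ) := by ring
        rw [this]
        exact AddSubgroup.mem_zmultiples_iff.mpr ⟨p, by simp⟩
      show (((zt.1 + (p:ℝ) : ℝ) : AddCircle (1:ℝ)), zt.2) = cov zt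
      exact Prod.ext hcoe rfl
    rcases hKfr hztK with hfr | hfr
    · -- frontier U, use ρp
      by_cases h0 : (q:ℝ) * ρp = 0
      · have hne : (q:ℝ) * ρp + ((1:ℤ):ℝ) ≠ 0 := by rw [h0]; norm_num
        exact (hiii q 1 hq).1 hne (cov zt) hfr hfix
      · have hne : (q:ℝ) * ρp + ((0:ℤ):ℝ) ≠ 0 := by simpa using h0
        exact (hiii q 0 hq).1 hne (cov zt) hfr hfix
    · by_cases h0 : (q:ℝ) * ρm = 0
      · have hne : (q:ℝ) * ρm + ((1:ℤ):ℝ) ≠ 0 := by rw [h0]; norm_num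
        exact (hiii q 1 hq).2 hne (cov zt) hfr hfix
      · have hne : (q:ℝ) * ρm + ((0:ℤ):ℝ) ≠ 0 := by simpa using h0
        exact (hiii q 0 hq).2 hne (cov zt) hfr hfix
  have key0 : a ≤ 0 → (0:ℝ) ≤ b → False := by
    intro h1 h2
    exact key 0 1 le_rfl (by simpa using h1) (by simpa using h2)
  -- boundedness
  have hbdd : BddAbove (rotSet F K) := by
    by_contra hc
    have hb0 : b = 0 := Real.sSup_of_not_bddAbove hc
    have hbm0 : a ≤ 0 := by rw [← hb0]; exact le_trans hi.1 hi.2.1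
    exact key0 hbm0 (le_of_eq hb0.symm)
  have hbddb : BddBelow (rotSet F K) := by
    by_contra hc
    have ha0 : a = 0 := Real.sInf_of_not_bddBelow hc
    have h0b : (0:ℝ) ≤ b := by rw [← ha0]; exact le_trans hi.1 hi.2.1
    exact key0 (le_of_eq ha0) h0b
  have hne : (rotSet F K).Nonempty := by
    by_contra hc
    rw [Set.not_nonempty_iff_eq_empty] at hc
    have ha0 : a = 0 := by rw [ha, hc]; exact Real.sInf_empty
    have hb0 : b = 0 := by rw [hb, hc]; exact Real.sSup_empty
    exact key0 (le_of_eq ha0) (le_of_eq hb0.symm)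
  -- a = b
  have hab : a = b := by
    by_contra hc
    have hlt : a < b := lt_of_le_of_ne (le_trans hi.1 hi.2.1) hc
    obtain ⟨r, hr1, hr2⟩ := exists_rat_btwn hlt
    have hden : 1 ≤ r.den := r.den_pos
    have hcast : ((r:ℝ)) = ((r.num:ℝ))/((r.den:ℝ)) := by
      rw [Rat.cast_def]
    exact key r.num r.den hden (by rw [← hcast]; exact le_of_lt hr1)
      (by rw [← hcast]; exact le_of_lt hr2)
  have hpa : ρp = a := le_antisymm (by rw [hab]; exact hi.2.1) hi.1
  have hma : ρm = a := le_antisymm (by rw [hab]; exact hi.2.2.2) hi.2.2.1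
  have hsub : rotSet F K ⊆ {ρp} := by
    intro x hx
    have h1 : a ≤ x := csInf_le hbddb hx
    have h2 : x ≤ b := le_csSup hbdd hx
    have : x = a := le_antisymm (hab ▸ h2) h1
    simp [this, hpa]
  refine ⟨Set.Subset.antisymm hsub ?_, by rw [hma, hpa]⟩
  obtain ⟨x, hx⟩ := hne
  have := hsub hx
  simp only [Set.mem_singleton_iff] at this
  intro y hy
  simp only [Set.mem_singleton_iff] at hy
  rw [hy, ← this]
  exact hx
end

section
/- Let Φ and g be homeomorphisms of a surface N₀ with fixed equivariantly isotopic lifts Φ̃, g̃ to the universal cover Ñ₀ endowed with an equivariant metric d̃, where the deck group acts properly discontinuously by isometries, and let C > 0. If sequences x_n → x and y_n → y in N₀ satisfy that for each n there exist lifts x̃_n, ỹ_n with d̃(Φ̃ᵏ(x̃_n), g̃ᵏ(ỹ_n)) ≤ C for all k ∈ ℤ, then there exist lifts x̃, ỹ of x, y with d̃(Φ̃ᵏ(x̃), g̃ᵏ(ỹ)) ≤ C for all k ∈ ℤ. -/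
open Filter Topology

private lemma perm_zpow_equivariant {Nt : Type*} {G : Type*} [Group G] [MulAction G Nt]
    (Φ : Equiv.Perm Nt) (hΦeq : ∀ (γ : G) (a : Nt), Φ (γ • a) = γ • Φ a)
    (k : ℤ) (γ : G) (a : Nt) : (Φ ^ k) (γ • a) = γ • (Φ ^ k) a := by
  have hinv : ∀ (γ : G) (a : Nt), Φ⁻¹ (γ • a) = γ • Φ⁻¹ a := by
    intro γ a
    apply Φ.injective
    rw [hΦeq]
    simp [Equiv.Perm.inv_def]
  induction k using Int.induction_on generalizing a with
  | zero => simp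
  | succ n ih =>
      rw [zpow_add_one, Equiv.Perm.mul_apply, Equiv.Perm.mul_apply, hΦeq, ih]
  | pred n ih =>
      rw [show (-(n : ℤ) - 1) = (-(n:ℤ)) + (-1) by ring, zpow_add, Equiv.Perm.mul_apply,
        Equiv.Perm.mul_apply, zpow_neg_one, hinv, ih]

private lemma perm_zpow_continuous {Nt : Type*} [TopologicalSpace Nt]
    (Φ : Equiv.Perm Nt) (hc : Continuous Φ) (hc' : Continuous Φ.symm)
    (k : ℤ) : Continuous ⇑(Φ ^ k) := by
  induction k using Int.induction_on with
  | zero => simpa using continuous_id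
  | succ n ih =>
      have : ⇑(Φ ^ ((n : ℤ) + 1)) = ⇑(Φ ^ (n : ℤ)) ∘ ⇑Φ := by
        funext a; rw [zpow_add_one]; rfl
      rw [this]; exact ih.comp hc
  | pred n ih =>
      have : ⇑(Φ ^ (-(n : ℤ) - 1)) = ⇑(Φ ^ (-(n : ℤ))) ∘ ⇑Φ.symm := by
        funext a
        rw [show (-(n : ℤ) - 1) = (-(n:ℤ)) + (-1) by ring, zpow_add, Equiv.Perm.mul_apply,
          zpow_neg_one]
        rfl
      rw [this]; exact ih.comp hc'

/-- Closedness of the global shadowing relation: let `Nt` be a proper metric space on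
which a deck group `G` acts properly discontinuously by isometries, with quotient
(covering) map `π : Nt → N`, and let `Φ`, `g` be equivariant bijections of `Nt`
(lifts of maps of `N`), continuous with continuous inverses. If `x_n → x`, `y_n → y`
in `N` and for each `n` there are lifts whose full `Φ`- and `g`-orbits stay at
distance at most `C`, then there are lifts of `x` and `y` whose full orbits stay at
distance at most `C`. -/
theorem stmt_16 {Nt : Type*} [MetricSpace Nt] [ProperSpace Nt]
    {G : Type*} [Group G] [MulAction G Nt]
    (hiso : ∀ γ : G, Isometry fun a : Nt => γ • a)
    [ProperlyDiscontinuousSMul G Nt]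
    {N : Type*} [TopologicalSpace N] (π : Nt → N)
    (hcov : IsCoveringMap π)
    (hfib : ∀ a b : Nt, π a = π b ↔ ∃ γ : G, γ • a = b)
    (Φ g : Equiv.Perm Nt)
    (hΦc : Continuous Φ) (hΦc' : Continuous Φ.symm)
    (hgc : Continuous g) (hgc' : Continuous g.symm)
    (hΦeq : ∀ (γ : G) (a : Nt), Φ (γ • a) = γ • Φ a)
    (hgeq : ∀ (γ : G) (a : Nt), g (γ • a) = γ • g a)
    (C : ℝ) (hC : 0 < C)
    (x y : N) (xs ys : ℕ → N)
    (hx : Tendsto xs atTop (𝓝 x)) (hy : Tendsto ys atTop (𝓝 y))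
    (hshadow : ∀ n : ℕ, ∃ xt yt : Nt, π xt = xs n ∧ π yt = ys n ∧
      ∀ k : ℤ, dist ((Φ ^ k) xt) ((g ^ k) yt) ≤ C) :
    ∃ xt yt : Nt, π xt = x ∧ π yt = y ∧
      ∀ k : ℤ, dist ((Φ ^ k) xt) ((g ^ k) yt) ≤ C := by
  classical
  choose a b hax hby hab using hshadow
  -- deck translates preserve π
  have hπsmul : ∀ (γ : G) (p : Nt), π (γ • p) = π p := fun γ p =>
    ((hfib p (γ • p)).mpr ⟨γ, rfl⟩).symm
  -- existence of a lift of a limit point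
  have lift_exists : ∀ (z : N) (zs : ℕ → N) (zt : ℕ → Nt),
      Tendsto zs atTop (𝓝 z) → (∀ n, π (zt n) = zs n) → ∃ p : Nt, π p = z := by
    intro z zs zt hz hzt
    obtain ⟨_, U, hzbase, hUo, -, H, -⟩ := hcov z
    have : ∀ᶠ n in atTop, zs n ∈ U :=
      hz (hUo.mem_nhds hzbase)
    obtain ⟨n, hn⟩ := this.exists
    have hsrc : zt n ∈ π ⁻¹' U := by show π (zt n) ∈ U; rw [hzt n]; exact hn
    exact ⟨((H ⟨zt n, hsrc⟩).2 : Nt), (H ⟨zt n, hsrc⟩).2.2⟩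
  obtain ⟨x0, hx0⟩ := lift_exists x xs a hx hax
  obtain ⟨y0, hy0⟩ := lift_exists y ys b hy hby
  -- local homeomorphism charts at x0 and y0
  obtain ⟨e, hex, hπe⟩ := hcov.isLocalHomeomorph x0
  obtain ⟨e', hey, hπe'⟩ := hcov.isLocalHomeomorph y0
  have hxtgt : x ∈ e.target := by rw [← hx0, hπe]; exact e.map_source hex
  have hytgt : y ∈ e'.target := by rw [← hy0, hπe']; exact e'.map_source hey
  have hesymmx : e.symm x = x0 := by rw [← hx0, hπe]; exact e.left_inv hex
  have hesymmy : e'.symm y = y0 := by rw [← hy0, hπe']; exact e'.left_inv hey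
  -- convergence of local sections
  have hcontx : Tendsto (fun w => e.symm w) (𝓝[e.target] x) (𝓝 x0) := by
    have h2 : Tendsto (⇑e.symm) (𝓝[e.target] x) (𝓝 (e.symm x)) :=
      e.continuousOn_symm.continuousWithinAt hxtgt
    rwa [hesymmx] at h2
  have hconty : Tendsto (fun w => e'.symm w) (𝓝[e'.target] y) (𝓝 y0) := by
    have h2 : Tendsto (⇑e'.symm) (𝓝[e'.target] y) (𝓝 (e'.symm y)) :=
      e'.continuousOn_symm.continuousWithinAt hytgt
    rwa [hesymmy] at h2
  -- eventually: xs n ∈ e.target, ys n ∈ e'.target, sections close to x0, y0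
  have hev : ∀ᶠ n in atTop, xs n ∈ e.target ∧ ys n ∈ e'.target ∧
      dist (e.symm (xs n)) x0 ≤ 1 ∧ dist (e'.symm (ys n)) y0 ≤ 1 := by
    have h1 : ∀ᶠ n in atTop, xs n ∈ e.target := hx (e.open_target.mem_nhds hxtgt)
    have h2 : ∀ᶠ n in atTop, ys n ∈ e'.target := hy (e'.open_target.mem_nhds hytgt)
    have h3 : Tendsto (fun n => e.symm (xs n)) atTop (𝓝 x0) :=
      hcontx.comp (tendsto_nhdsWithin_iff.mpr ⟨hx, h1⟩)
    have h4 : Tendsto (fun n => e'.symm (ys n)) atTop (𝓝 y0) :=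
      hconty.comp (tendsto_nhdsWithin_iff.mpr ⟨hy, h2⟩)
    have h5 : ∀ᶠ n in atTop, dist (e.symm (xs n)) x0 ≤ 1 :=
      h3 (Metric.closedBall_mem_nhds x0 one_pos)
    have h6 : ∀ᶠ n in atTop, dist (e'.symm (ys n)) y0 ≤ 1 :=
      h4 (Metric.closedBall_mem_nhds y0 one_pos)
    filter_upwards [h1, h2, h5, h6] with n w1 w2 w3 w4
    exact ⟨w1, w2, w3, w4⟩
  obtain ⟨M, hM⟩ := hev.exists_forall_of_atTop
  -- shifted sequences
  set u : ℕ → Nt := fun n => e.symm (xs (n + M)) with hu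
  set w : ℕ → Nt := fun n => e'.symm (ys (n + M)) with hw
  have hMn : ∀ n : ℕ, M ≤ n + M := fun n => Nat.le_add_left M n
  have hπu : ∀ n, π (u n) = xs (n + M) := fun n => by
    rw [hπe]; exact e.right_inv (hM _ (hMn n)).1
  have hπw : ∀ n, π (w n) = ys (n + M) := fun n => by
    rw [hπe']; exact e'.right_inv (hM _ (hMn n)).2.1
  have hu1 : ∀ n, dist (u n) x0 ≤ 1 := fun n => (hM _ (hMn n)).2.2.1
  have hw1 : ∀ n, dist (w n) y0 ≤ 1 := fun n => (hM _ (hMn n)).2.2.2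
  -- deck translates of the given lifts
  have hγ : ∀ n, ∃ γ : G, γ • a (n + M) = u n := fun n =>
    (hfib (a (n + M)) (u n)).mp (by rw [hax, hπu])
  choose γ hγ using hγ
  set b' : ℕ → Nt := fun n => γ n • b (n + M) with hb'
  have hπb' : ∀ n, π (b' n) = ys (n + M) := fun n => by
    rw [hb']; simp only [hπsmul]; exact hby _
  have hshadow' : ∀ (n : ℕ) (k : ℤ), dist ((Φ ^ k) (u n)) ((g ^ k) (b' n)) ≤ C := by
    intro n k
    rw [← hγ n]
    show dist ((Φ ^ k) (γ n • a (n + M))) ((g ^ k) (γ n • b (n + M))) ≤ C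
    rw [perm_zpow_equivariant Φ hΦeq, perm_zpow_equivariant g hgeq, (hiso (γ n)).dist_eq]
    exact hab _ k
  -- b' n lies in a fixed compact ball
  have hb'ball : ∀ n, b' n ∈ Metric.closedBall x0 (C + 1) := by
    intro n
    have h0 := hshadow' n 0
    simp only [zpow_zero, Equiv.Perm.coe_one, id_eq] at h0
    have := dist_triangle (b' n) (u n) x0
    rw [Metric.mem_closedBall]
    calc dist (b' n) x0 ≤ dist (b' n) (u n) + dist (u n) x0 := this
      _ ≤ C + 1 := add_le_add (by rwa [dist_comm] at h0) (hu1 n)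
  -- b' n = δ n • w n for some deck elements δ n in a finite set
  have hδ : ∀ n, ∃ δ : G, δ • w n = b' n := fun n =>
    (hfib (w n) (b' n)).mp (by rw [hπw, hπb'])
  choose δ hδ using hδ
  have hK : IsCompact (Metric.closedBall y0 1) := isCompact_closedBall y0 1
  have hL : IsCompact (Metric.closedBall x0 (C + 1)) := isCompact_closedBall x0 (C + 1)
  have hfin := ProperlyDiscontinuousSMul.finite_disjoint_inter_image (Γ := G) hK hL
  have hδmem : ∀ n, δ n ∈ { γ : G | ((γ • ·) '' Metric.closedBall y0 1 ∩
      Metric.closedBall x0 (C + 1)) ≠ ∅ } := by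
    intro n
    apply Set.nonempty_iff_ne_empty.mp
    exact ⟨b' n, ⟨w n, Metric.mem_closedBall.mpr (hw1 n), hδ n⟩, hb'ball n⟩
  -- pigeonhole: some δ occurs infinitely often
  have : ∃ γ0 : G, {n : ℕ | δ n = γ0}.Infinite := by
    haveI hfinS : Finite { γ : G // γ ∈ { γ : G | ((γ • ·) '' Metric.closedBall y0 1 ∩
        Metric.closedBall x0 (C + 1)) ≠ ∅ } } :=
      (hfin.subset (fun γ hγ => Set.nonempty_iff_ne_empty.mpr hγ)).to_subtype
    set f : ℕ → {γ : G // γ ∈ { γ : G | ((γ • ·) '' Metric.closedBall y0 1 ∩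
        Metric.closedBall x0 (C + 1)) ≠ ∅ }} := fun n => ⟨δ n, hδmem n⟩ with hf
    obtain ⟨γ0, hγ0⟩ := Finite.exists_infinite_fiber f
    refine ⟨(γ0 : G), ?_⟩
    have hsub : (f ⁻¹' {γ0} : Set ℕ) ⊆ {n : ℕ | δ n = (γ0 : G)} := by
      intro n hn
      simp only [Set.mem_preimage, Set.mem_singleton_iff, hf] at hn
      simpa using congrArg Subtype.val hn
    exact (Set.infinite_coe_iff.mp hγ0).mono hsub
  obtain ⟨γ0, hγ0⟩ := this
  obtain ⟨φ, hφmono, hφ⟩ := extraction_of_frequently_atTop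
    (frequently_atTop.mpr fun N => by
      obtain ⟨n, hn, hNn⟩ := hγ0.exists_gt N
      exact ⟨n, hNn.le, hn⟩)
  -- the limits
  refine ⟨x0, γ0 • y0, hx0, by rw [hπsmul, hy0], fun k => ?_⟩
  have hulim : Tendsto (fun j => u (φ j)) atTop (𝓝 x0) := by
    have h1 : ∀ᶠ n in atTop, xs n ∈ e.target := hx (e.open_target.mem_nhds hxtgt)
    have h3 : Tendsto (fun n => e.symm (xs n)) atTop (𝓝 x0) :=
      hcontx.comp (tendsto_nhdsWithin_iff.mpr ⟨hx, h1⟩)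
    exact (h3.comp (tendsto_add_atTop_nat M)).comp hφmono.tendsto_atTop
  have hwlim : Tendsto (fun j => w (φ j)) atTop (𝓝 y0) := by
    have h2 : ∀ᶠ n in atTop, ys n ∈ e'.target := hy (e'.open_target.mem_nhds hytgt)
    have h4 : Tendsto (fun n => e'.symm (ys n)) atTop (𝓝 y0) :=
      hconty.comp (tendsto_nhdsWithin_iff.mpr ⟨hy, h2⟩)
    exact (h4.comp (tendsto_add_atTop_nat M)).comp hφmono.tendsto_atTop
  have hb'lim : Tendsto (fun j => b' (φ j)) atTop (𝓝 (γ0 • y0)) := by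
    have : (fun j => b' (φ j)) = fun j => γ0 • w (φ j) := by
      funext j; rw [← hδ (φ j), hφ j]
    rw [this]
    exact ((hiso γ0).continuous.tendsto y0).comp hwlim
  have hdistlim : Tendsto (fun j => dist ((Φ ^ k) (u (φ j))) ((g ^ k) (b' (φ j)))) atTop
      (𝓝 (dist ((Φ ^ k) x0) ((g ^ k) (γ0 • y0)))) := by
    exact ((((perm_zpow_continuous Φ hΦc hΦc' k).tendsto x0).comp hulim).dist
      (((perm_zpow_continuous g hgc hgc' k).tendsto (γ0 • y0)).comp hb'lim))
  exact le_of_tendsto hdistlim (Eventually.of_forall fun j => hshadow' (φ j) k)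
end
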